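/- arXiv:2403.00652 — 4 statements merged into one kernel-verified Lean document; each statement's English description precedes it below -/
import Mathlib

section
/- If B is a nonnegative real square matrix and there exists a polynomial p such that p(B) = J, then B is λ-doubly stochastic for some real λ, i.e., all row sums and all column sums of B equal λ. -/
open Polynomial Matrix

theorem stmt1 {V : Type*} [Fintype V] [DecidableEq V] [Nonempty V]
    (B : Matrix V V ℝ) (hnn : ∀ x y, 0 ≤ B x y)
    (h : ∃ p : Polynomial ℂ,
      aeval (B.map (Complex.ofReal)) p = Matrix.of (fun _ _ => (1 : ℂ))) :
    ∃ lam : ℝ, (∀ x, ∑ y, B x y = lam) ∧ (∀ y, ∑ x, B x y = lam) := by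
  obtain ⟨p, hp⟩ := h
  set C := B.map (Complex.ofReal) with hC
  have hcomm : C * aeval C p = aeval C p * C := by
    have := (Commute.all (X : Polynomial ℂ) p).map (aeval C)
    simpa [Commute, SemiconjBy, aeval_X] using this
  rw [hp] at hcomm
  have key : ∀ x y : V, (∑ z, B x z : ℝ) = ∑ z, B z y := by
    intro x y
    have h1 := congrFun (congrFun hcomm x) y
    simp only [Matrix.mul_apply, Matrix.of_apply, hC, Matrix.map_apply] at h1
    have : ((∑ z, B x z : ℝ) : ℂ) = ((∑ z, B z y : ℝ) : ℂ) := by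
      push_cast
      simpa using h1
    exact_mod_cast this
  obtain ⟨x₀⟩ := ‹Nonempty V›
  exact ⟨∑ z, B x₀ z, fun x => (key x x₀).trans (key x₀ x₀).symm, fun y => (key x₀ y).symm⟩
end

section
/- If B is a λ-doubly stochastic irreducible nonnegative real matrix, then there exists a polynomial p with real coefficients such that p(B) = J. -/
open Polynomial Matrix

/-- A nonnegative matrix is irreducible iff its underlying digraph is strongly connected. -/
def MatIrreducible {V : Type*} [Fintype V] [DecidableEq V] (B : Matrix V V ℝ) : Prop :=
  ∀ x y : V, ∃ ℓ : ℕ, 0 < ℓ ∧ (B ^ ℓ) x y ≠ 0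

/-!
Let `E = J / n` be the averaging projection. Equal row and column sums `λ` make `E` commute
with `B` and `B E = λ E`, so `B = D + λ E` with `D E = E D = 0`. By the maximum principle, an
eigenvector of the irreducible matrix `B` for `λ` is constant. An eigenvector of `D` for `λ`
lies in `ker E` (as `E D = 0`), so it is an eigenvector of `B` with mean zero, hence zero. So `f = charpoly D` satisfies `f(D) = 0` and `f(λ) ≠ 0`, and splitting
along `E` and `1 - E` gives `f(B) = f(λ) E`.
-/

namespace Polynomial

theorem aeval_mul_eq_aeval_mul {R A : Type*} [CommSemiring R] [Semiring A] [Algebra R A]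
    {a b e : A} (hb : Commute e b) (h : a * e = b * e) (p : R[X]) :
    aeval a p * e = aeval b p * e := by
  have hpow : ∀ k : ℕ, a ^ k * e = b ^ k * e := by
    intro k
    induction k with
    | zero => simp
    | succ k ih =>
      calc a ^ (k + 1) * e = a * e * b ^ k := by
            rw [pow_succ', mul_assoc, ih, ← (hb.pow_right k).eq, mul_assoc]
        _ = b ^ (k + 1) * e := by
            rw [h, mul_assoc, (hb.pow_right k).eq, ← mul_assoc, ← pow_succ']
  simp only [aeval_eq_sum_range, Finset.sum_mul, smul_mul_assoc, hpow]

theorem exists_aeval_add_smul_eq {K A : Type*} [Field K] [Ring A] [Algebra K A]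
    {d e : A} {c : K} (he : IsIdempotentElem e) (hde : d * e = 0) (hed : e * d = 0)
    {f : K[X]} (hf : aeval d f = 0) (hfc : f.eval c ≠ 0) :
    ∃ p : K[X], aeval (d + c • e) p = e := by
  set b := d + c • e
  have hb_e : b * e = algebraMap K A c * e := by
    rw [add_mul, hde, smul_mul_assoc, he.eq, zero_add, Algebra.smul_def]
  have hb_compl : b * (1 - e) = d * (1 - e) := by
    rw [add_mul, smul_mul_assoc, he.mul_one_sub_self, smul_zero, add_zero]
  have hcompl_d : Commute (1 - e) d := by
    rw [Commute, SemiconjBy, sub_mul, mul_sub, hed, hde, one_mul, mul_one]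
  have hf_e : aeval b f * e = f.eval c • e := by
    rw [aeval_mul_eq_aeval_mul (Algebra.commutes c e).symm hb_e,
      aeval_algebraMap_apply_eq_algebraMap_eval, ← Algebra.smul_def]
  have hf_compl : aeval b f * (1 - e) = 0 := by
    rw [aeval_mul_eq_aeval_mul hcompl_d hb_compl, hf, zero_mul]
  have hfb : aeval b f = f.eval c • e := by
    rw [← hf_e, ← add_zero (aeval b f * e), ← hf_compl, ← mul_add, add_sub_cancel, mul_one]
  refine ⟨C (f.eval c)⁻¹ * f, ?_⟩
  rw [map_mul, aeval_C, hfb, ← Algebra.smul_def, smul_smul, inv_mul_cancel₀ hfc, one_smul]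

end Polynomial

namespace Matrix

variable {n : Type*} [Fintype n]

theorem pow_mulVec_eq_smul {R : Type*} [CommRing R] [DecidableEq n] {M : Matrix n n R} {r : R}
    {v : n → R} (hv : M *ᵥ v = r • v) (k : ℕ) : (M ^ k) *ᵥ v = r ^ k • v := by
  induction k with
  | zero => simp
  | succ k ih => rw [pow_succ', ← mulVec_mulVec, ih, mulVec_smul, hv, smul_smul, ← pow_succ]

/-- Maximum principle for nonnegative matrices with constant row sums. -/
theorem apply_eq_of_mulVec_eq_smul_of_forall_le {R : Type*} [CommRing R] [LinearOrder R]
    [IsStrictOrderedRing R] {M : Matrix n n R} {r : R} {v : n → R} (hM : ∀ i j, 0 ≤ M i j)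
    (hrow : M *ᵥ 1 = r • 1) (hv : M *ᵥ v = r • v) {i j : n} (hmax : ∀ k, v k ≤ v i)
    (hij : M i j ≠ 0) : v j = v i := by
  have hsum : ∑ k, M i k * (v i - v k) = 0 := by
    have h1 := congrFun hrow i
    have h2 := congrFun hv i
    simp only [mulVec, dotProduct, Pi.one_apply, mul_one, Pi.smul_apply, smul_eq_mul] at h1 h2
    rw [Finset.sum_congr rfl fun k _ => mul_sub (M i k) (v i) (v k), Finset.sum_sub_distrib,
      ← Finset.sum_mul, h1, h2, sub_self]
  have hterm := (Finset.sum_eq_zero_iff_of_nonneg fun k _ =>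
    mul_nonneg (hM i k) (sub_nonneg.2 (hmax k))).1 hsum j (Finset.mem_univ j)
  exact (sub_eq_zero.1 ((mul_eq_zero.1 hterm).resolve_left hij)).symm

theorem eval_charpoly_ne_zero {K : Type*} [Field K] [DecidableEq n] {M : Matrix n n K} {c : K}
    (h : ∀ v, M *ᵥ v = c • v → v = 0) : M.charpoly.eval c ≠ 0 := by
  rw [eval_charpoly]
  intro hdet
  obtain ⟨v, hv0, hv⟩ := exists_mulVec_eq_zero_iff.2 hdet
  refine hv0 (h v ?_)
  rwa [sub_mulVec, scalar_apply, ← smul_one_eq_diagonal, smul_mulVec, one_mulVec, sub_eq_zero,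
    eq_comm] at hv

end Matrix

noncomputable def averagingMatrix (V : Type*) [Fintype V] : Matrix V V ℝ :=
  (Fintype.card V : ℝ)⁻¹ • Matrix.of fun _ _ => 1

section Averaging

variable {V : Type*} [Fintype V] {B : Matrix V V ℝ} {lam : ℝ}

theorem averagingMatrix_isIdempotentElem : IsIdempotentElem (averagingMatrix V) := by
  have hJ : (Matrix.of fun _ _ => (1 : ℝ)) * Matrix.of (fun _ _ => 1) =
      (Fintype.card V : ℝ) • Matrix.of (fun _ _ => (1 : ℝ) : V → V → ℝ) := by
    ext i j; simp [mul_apply]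
  have hcard : (Fintype.card V : ℝ)⁻¹ * (Fintype.card V : ℝ)⁻¹ * Fintype.card V =
      (Fintype.card V : ℝ)⁻¹ := by
    simpa using mul_self_mul_inv (Fintype.card V : ℝ)⁻¹
  rw [IsIdempotentElem, averagingMatrix, smul_mul_smul_comm, hJ, smul_smul, hcard]

theorem mul_averagingMatrix (hrow : B *ᵥ 1 = lam • 1) :
    B * averagingMatrix V = lam • averagingMatrix V := by
  ext i j
  have h := congrFun hrow i
  simp only [mulVec, dotProduct, Pi.one_apply, mul_one, Pi.smul_apply, smul_eq_mul] at h
  simp [averagingMatrix, mul_apply, ← Finset.sum_mul, h]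

theorem averagingMatrix_mul (hcol : 1 ᵥ* B = lam • 1) :
    averagingMatrix V * B = lam • averagingMatrix V := by
  ext i j
  have h := congrFun hcol j
  simp only [vecMul, dotProduct, Pi.one_apply, one_mul, Pi.smul_apply, smul_eq_mul,
    mul_one] at h
  simp [averagingMatrix, mul_apply, ← Finset.mul_sum, h, mul_comm lam]

theorem averagingMatrix_mulVec_of_forall_eq {v : V → ℝ} (hv : ∀ i j, v i = v j) :
    averagingMatrix V *ᵥ v = v := by
  ext i
  have : Nonempty V := ⟨i⟩
  simp [averagingMatrix, mulVec, dotProduct, hv _ i]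

theorem averagingMatrix_mul_sub_smul (hcol : 1 ᵥ* B = lam • 1) :
    averagingMatrix V * (B - lam • averagingMatrix V) = 0 := by
  rw [mul_sub, averagingMatrix_mul hcol, mul_smul_comm, averagingMatrix_isIdempotentElem.eq,
    sub_self]

theorem sub_smul_averagingMatrix_mul (hrow : B *ᵥ 1 = lam • 1) :
    (B - lam • averagingMatrix V) * averagingMatrix V = 0 := by
  rw [sub_mul, mul_averagingMatrix hrow, smul_mul_assoc, averagingMatrix_isIdempotentElem.eq,
    sub_self]

end Averaging

namespace MatIrreducible

variable {V : Type*} [Fintype V] [DecidableEq V] {B : Matrix V V ℝ} {lam : ℝ}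

theorem apply_eq_of_mulVec_eq_smul (hirr : MatIrreducible B) (hnn : ∀ x y, 0 ≤ B x y)
    (hrow : B *ᵥ 1 = lam • 1) {v : V → ℝ} (hv : B *ᵥ v = lam • v) (i j : V) :
    v i = v j := by
  have : Nonempty V := ⟨i⟩
  obtain ⟨i₀, hmax⟩ := Finite.exists_max v
  have h_eq_max : ∀ k, v k = v i₀ := fun k => by
    obtain ⟨ℓ, -, hℓ⟩ := hirr i₀ k
    exact apply_eq_of_mulVec_eq_smul_of_forall_le (pow_apply_nonneg hnn ℓ)
      (pow_mulVec_eq_smul hrow ℓ) (pow_mulVec_eq_smul hv ℓ) hmax hℓ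
  rw [h_eq_max i, h_eq_max j]

theorem eq_zero_of_mulVec_eq_smul (hirr : MatIrreducible B) (hnn : ∀ x y, 0 ≤ B x y)
    (hrow : B *ᵥ 1 = lam • 1) (hcol : 1 ᵥ* B = lam • 1) (hlam : lam ≠ 0) {v : V → ℝ}
    (hv : (B - lam • averagingMatrix V) *ᵥ v = lam • v) : v = 0 := by
  have hEv : averagingMatrix V *ᵥ v = 0 := by
    have h := congrArg (averagingMatrix V *ᵥ ·) hv
    simp only [mulVec_mulVec, averagingMatrix_mul_sub_smul hcol, zero_mulVec, mulVec_smul] at h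
    exact (smul_eq_zero.1 h.symm).resolve_left hlam
  have hBv : B *ᵥ v = lam • v := by
    rwa [sub_mulVec, smul_mulVec, hEv, smul_zero, sub_zero] at hv
  rw [← averagingMatrix_mulVec_of_forall_eq (hirr.apply_eq_of_mulVec_eq_smul hnn hrow hBv), hEv]

theorem exists_aeval_eq_averagingMatrix (hirr : MatIrreducible B) (hnn : ∀ x y, 0 ≤ B x y)
    (hrow : B *ᵥ 1 = lam • 1) (hcol : 1 ᵥ* B = lam • 1) (hlam : lam ≠ 0) :
    ∃ p : ℝ[X], aeval B p = averagingMatrix V := by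
  simpa only [sub_add_cancel] using exists_aeval_add_smul_eq averagingMatrix_isIdempotentElem
    (sub_smul_averagingMatrix_mul hrow) (averagingMatrix_mul_sub_smul hcol)
    (aeval_self_charpoly _)
    (eval_charpoly_ne_zero fun v hv => hirr.eq_zero_of_mulVec_eq_smul hnn hrow hcol hlam hv)

end MatIrreducible

theorem stmt2 {V : Type*} [Fintype V] [DecidableEq V] [Nonempty V]
    (B : Matrix V V ℝ) (lam : ℝ) (hpos : 0 < lam)
    (hnn : ∀ x y, 0 ≤ B x y)
    (hrow : ∀ x, ∑ y, B x y = lam) (hcol : ∀ y, ∑ x, B x y = lam)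
    (hirr : MatIrreducible B) :
    ∃ p : Polynomial ℝ, aeval B p = Matrix.of (fun _ _ => (1 : ℝ)) := by
  have hrow' : B *ᵥ 1 = lam • 1 := by ext x; simp [mulVec, dotProduct, hrow]
  have hcol' : 1 ᵥ* B = lam • 1 := by ext y; simp [vecMul, dotProduct, hcol]
  obtain ⟨p, hp⟩ := hirr.exists_aeval_eq_averagingMatrix hnn hrow' hcol' hpos.ne'
  refine ⟨C (Fintype.card V : ℝ) * p, ?_⟩
  rw [map_mul, aeval_C, hp, averagingMatrix, ← Algebra.smul_def, smul_smul,
    mul_inv_cancel₀ (Nat.cast_ne_zero.2 Fintype.card_ne_zero), one_smul]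
end

section
/- Let B be a λ-doubly stochastic irreducible nonnegative matrix with minimal polynomial m(t) = (t - λ)q(t). Then q(λ) ≠ 0 and the polynomial h(t) = (|X|/q(λ))·q(t) satisfies h(B) = J; moreover h is the unique polynomial of smallest degree satisfying p(B) = J. -/
open Polynomial Matrix

lemma eig_const {V : Type*} [Fintype V] [DecidableEq V] [Nonempty V]
    (B : Matrix V V ℝ) (lam : ℝ)
    (hnn : ∀ x y, 0 ≤ B x y) (hrow : ∀ x, ∑ y, B x y = lam)
    (hirr : MatIrreducible B) (v : V → ℝ) (hv : B *ᵥ v = lam • v)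
    (x y : V) : v x = v y := by
  obtain ⟨x₀, -, hx₀⟩ := Finset.exists_max_image Finset.univ v ⟨Classical.arbitrary V, Finset.mem_univ _⟩
  set m := v x₀ with hm
  have step : ∀ z w, v z = m → B z w ≠ 0 → v w = m := by
    intro z w hz hBzw
    have h1 : ∑ j, B z j * v j = lam * m := by
      have := congrFun hv z
      simpa [Matrix.mulVec, dotProduct, hz] using this
    have h2 : ∑ j, B z j * m = lam * m := by
      rw [← Finset.sum_mul, hrow]
    have hle : ∀ j ∈ Finset.univ, B z j * v j ≤ B z j * m :=
      fun j _ => mul_le_mul_of_nonneg_left (hx₀ j (Finset.mem_univ j)) (hnn z j)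
    have heq : ∀ j ∈ Finset.univ, B z j * v j = B z j * m := by
      rw [← Finset.sum_eq_sum_iff_of_le hle]
      rw [h1, h2]
    exact mul_left_cancel₀ hBzw (heq w (Finset.mem_univ w))
  have main : ∀ ℓ (w : V), (B ^ ℓ) x₀ w ≠ 0 → v w = m := by
    intro ℓ
    induction ℓ with
    | zero =>
      intro w hw
      simp only [pow_zero, Matrix.one_apply] at hw
      by_cases h : x₀ = w
      · rw [← h]
      · simp [h] at hw
    | succ n ih =>
      intro w hw
      rw [pow_succ, Matrix.mul_apply] at hw
      obtain ⟨z, -, hz⟩ := Finset.exists_ne_zero_of_sum_ne_zero hw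
      exact step z w (ih z (left_ne_zero_of_mul hz)) (right_ne_zero_of_mul hz)
  obtain ⟨ℓx, -, hℓx⟩ := hirr x₀ x
  obtain ⟨ℓy, -, hℓy⟩ := hirr x₀ y
  rw [main ℓx x hℓx, main ℓy y hℓy]

lemma pow_row_sum {V : Type*} [Fintype V] [DecidableEq V]
    (B : Matrix V V ℝ) (lam : ℝ) (hrow : ∀ x, ∑ y, B x y = lam) :
    ∀ (n : ℕ) (x : V), ∑ y, (B ^ n) x y = lam ^ n := by
  intro n
  induction n with
  | zero => intro x; simp [Matrix.one_apply]
  | succ n ih =>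
    intro x
    rw [pow_succ']
    simp only [Matrix.mul_apply]
    rw [Finset.sum_comm]
    calc ∑ z, ∑ y, B x z * (B ^ n) z y
        = ∑ z, B x z * lam ^ n := by
          refine Finset.sum_congr rfl fun z _ => ?_
          rw [← Finset.mul_sum, ih z]
      _ = lam ^ (n + 1) := by
          rw [← Finset.sum_mul, hrow]; ring

lemma aeval_row_sum {V : Type*} [Fintype V] [DecidableEq V]
    (B : Matrix V V ℝ) (lam : ℝ) (hrow : ∀ x, ∑ y, B x y = lam)
    (p : Polynomial ℝ) (x : V) : ∑ y, (aeval B p) x y = p.eval lam := by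
  induction p using Polynomial.induction_on' with
  | add f g hf hg => simp [Finset.sum_add_distrib, hf, hg]
  | monomial n a =>
    rw [aeval_monomial]
    simp only [Matrix.mul_apply, Algebra.algebraMap_eq_smul_one]
    simp only [Matrix.smul_apply, Matrix.one_apply, smul_eq_mul]
    rw [eval_monomial]
    calc ∑ y, (∑ z, (a * if x = z then 1 else 0) * (B ^ n) z y)
        = ∑ y, a * (B ^ n) x y := by
          refine Finset.sum_congr rfl fun y _ => ?_
          rw [Finset.sum_eq_single x]
          · simp
          · intro b _ hb; simp [Ne.symm hb]
          · simp
      _ = a * lam ^ n := by rw [← Finset.mul_sum, pow_row_sum B lam hrow]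

theorem stmt3 {V : Type*} [Fintype V] [DecidableEq V] [Nonempty V]
    (B : Matrix V V ℝ) (lam : ℝ) (hpos : 0 < lam)
    (hnn : ∀ x y, 0 ≤ B x y)
    (hrow : ∀ x, ∑ y, B x y = lam) (hcol : ∀ y, ∑ x, B x y = lam)
    (hirr : MatIrreducible B)
    (q : Polynomial ℝ) (hmin : minpoly ℝ B = (Polynomial.X - C lam) * q) :
    q.eval lam ≠ 0 ∧
    (let h : Polynomial ℝ := C ((Fintype.card V : ℝ) / q.eval lam) * q
     aeval B h = Matrix.of (fun _ _ => (1 : ℝ)) ∧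
     ∀ p : Polynomial ℝ, aeval B p = Matrix.of (fun _ _ => (1 : ℝ)) →
       h.natDegree ≤ p.natDegree ∧ (p.natDegree = h.natDegree → p = h)) := by
  classical
  set Q : Matrix V V ℝ := aeval B q with hQdef
  have hint : IsIntegral ℝ B := Algebra.IsIntegral.isIntegral B
  have hmne : minpoly ℝ B ≠ 0 := minpoly.ne_zero hint
  have hqne : q ≠ 0 := by
    intro h0; rw [h0, mul_zero] at hmin; exact hmne hmin
  have hXC : (X - C lam : Polynomial ℝ) ≠ 0 := X_sub_C_ne_zero lam
  -- (B - lam•1) * Q = 0 and Q * (B - lam•1) = 0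
  have haev : aeval B ((X - C lam) * q) = 0 := by
    rw [← hmin]; exact minpoly.aeval ℝ B
  have hBlam : aeval B (X - C lam) = B - lam • 1 := by
    simp [Algebra.algebraMap_eq_smul_one]
  have hBQ : B * Q = lam • Q := by
    have h0 : (B - lam • 1) * Q = 0 := by rw [← hBlam, hQdef, ← _root_.map_mul, haev]
    have := sub_eq_zero.mp (by rw [sub_mul, smul_mul_assoc, one_mul] at h0; exact h0)
    exact this
  have hQB : Q * B = lam • Q := by
    have h0 : Q * (B - lam • 1) = 0 := by
      rw [← hBlam, hQdef, ← _root_.map_mul, mul_comm q, haev]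
    have := sub_eq_zero.mp (by rw [mul_sub, mul_smul_comm, mul_one] at h0; exact h0)
    exact this
  -- transpose facts
  have hirrT : MatIrreducible Bᵀ := by
    intro x y
    obtain ⟨ℓ, hℓ, hne⟩ := hirr y x
    exact ⟨ℓ, hℓ, by rw [← Matrix.transpose_pow]; simpa using hne⟩
  -- Q is constant
  have hconst : ∀ x y x' y', Q x y = Q x' y' := by
    intro x y x' y'
    have hcolc : ∀ (y : V) (x x' : V), Q x y = Q x' y := by
      intro y x x'
      refine eig_const B lam hnn hrow hirr (fun z => Q z y) ?_ x x'
      funext z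
      have := congrFun (congrFun hBQ z) y
      simpa [Matrix.mul_apply, Matrix.mulVec, dotProduct] using this
    have hrowc : ∀ (x : V) (y y' : V), Q x y = Q x y' := by
      intro x y y'
      refine eig_const Bᵀ lam (fun a b => hnn b a) (fun a => hcol a) hirrT
        (fun w => Q x w) ?_ y y'
      funext z
      have := congrFun (congrFun hQB x) z
      simp only [Matrix.mul_apply, Matrix.smul_apply, smul_eq_mul] at this
      simp only [Matrix.mulVec, dotProduct, Matrix.transpose_apply, Pi.smul_apply,
        smul_eq_mul]
      rw [← this]
      exact Finset.sum_congr rfl fun j _ => mul_comm _ _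
    exact (hcolc y x x').trans (hrowc x' y y')
  obtain ⟨x₀⟩ := ‹Nonempty V›
  set c : ℝ := Q x₀ x₀ with hc
  have hQc : ∀ x y, Q x y = c := fun x y => hconst x y x₀ x₀
  have hcard : (0 : ℝ) < (Fintype.card V : ℝ) := by
    exact_mod_cast Fintype.card_pos
  have hnc : (Fintype.card V : ℝ) * c = q.eval lam := by
    have := aeval_row_sum B lam hrow q x₀
    rw [← this, ← hQdef]
    simp [hQc, Finset.sum_const, Finset.card_univ, mul_comm]
  have hql : q.eval lam ≠ 0 := by
    intro h0
    have hc0 : c = 0 := by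
      have := hnc; rw [h0] at this
      exact (mul_eq_zero.mp this).resolve_left hcard.ne'
    have hQ0 : Q = 0 := by
      ext x y; rw [hQc x y, hc0]; rfl
    have hdvd : minpoly ℝ B ∣ q := minpoly.dvd ℝ B (by rw [← hQdef]; exact hQ0)
    have hdeg : (minpoly ℝ B).natDegree ≤ q.natDegree :=
      Polynomial.natDegree_le_of_dvd hdvd hqne
    rw [hmin, Polynomial.natDegree_mul hXC hqne, Polynomial.natDegree_X_sub_C] at hdeg
    omega
  refine ⟨hql, ?_, ?_⟩
  · -- h(B) = J
    show aeval B (C ((Fintype.card V : ℝ) / q.eval lam) * q) = _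
    ext x y
    rw [_root_.map_mul, aeval_C, Algebra.algebraMap_eq_smul_one, smul_mul_assoc, one_mul]
    simp only [Matrix.smul_apply, ← hQdef, smul_eq_mul, Matrix.of_apply]
    rw [hQc x y]
    have : c = q.eval lam / (Fintype.card V : ℝ) := by
      field_simp at hnc ⊢
      linarith [hnc]
    rw [this]
    field_simp
  · -- minimality
    intro p hp
    have hCne : ((Fintype.card V : ℝ) / q.eval lam) ≠ 0 :=
      div_ne_zero hcard.ne' hql
    have hhdeg : (C ((Fintype.card V : ℝ) / q.eval lam) * q).natDegree = q.natDegree :=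
      Polynomial.natDegree_C_mul hCne
    have hpne : p ≠ 0 := by
      intro h0
      have := congrFun (congrFun hp x₀) x₀
      rw [h0] at this
      simp at this
    -- (B - lam•1) * J = 0, so minpoly ∣ (X - C lam) * p
    have hJ : aeval B ((X - C lam) * p) = 0 := by
      rw [_root_.map_mul, hBlam, hp]
      ext x y
      simp only [Matrix.mul_apply, Matrix.sub_apply, Matrix.smul_apply, Matrix.one_apply,
        Matrix.of_apply, smul_eq_mul, Matrix.zero_apply, mul_one, mul_ite, mul_zero]
      rw [Finset.sum_sub_distrib, hrow x]
      simp
    have hdvd : (X - C lam) * q ∣ (X - C lam) * p := by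
      rw [← hmin]; exact minpoly.dvd ℝ B hJ
    have hqp : q ∣ p := (mul_dvd_mul_iff_left hXC).mp hdvd
    have hdegle : q.natDegree ≤ p.natDegree := Polynomial.natDegree_le_of_dvd hqp hpne
    constructor
    · rw [hhdeg]; exact hdegle
    · intro hdeq
      obtain ⟨u, hu⟩ := hqp
      have hune : u ≠ 0 := by rintro rfl; rw [mul_zero] at hu; exact hpne hu
      have hu0 : u.natDegree = 0 := by
        have := Polynomial.natDegree_mul hqne hune
        rw [← hu, hdeq, hhdeg] at this
        omega
      obtain ⟨a, rfl⟩ : ∃ a, u = C a := ⟨u.coeff 0, Polynomial.eq_C_of_natDegree_eq_zero hu0⟩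
      -- evaluate: a * c = 1
      have hent : a * c = 1 := by
        have := congrFun (congrFun hp x₀) x₀
        rw [hu, _root_.map_mul, aeval_C, Algebra.algebraMap_eq_smul_one, mul_smul_comm, mul_one] at this
        simp only [Matrix.smul_apply, ← hQdef, smul_eq_mul, Matrix.of_apply] at this
        rw [hQc x₀ x₀] at this
        linarith [this]
      have ha : a = (Fintype.card V : ℝ) / q.eval lam := by
        have hcval : c = q.eval lam / (Fintype.card V : ℝ) := by
          field_simp at hnc ⊢; linarith [hnc]
        rw [hcval] at hent
        field_simp at hent ⊢
        linarith [hent]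
      rw [hu, ha, mul_comm]
end

section
/- Let B be a nonnegative irreducible real matrix whose algebra of polynomials ℬ = {p(B) : p ∈ ℂ[t]} is the Bose–Mesner algebra of a commutative D-class association scheme, where D is the diameter of the underlying digraph Γ of B. Then each distance-i matrix A_i of Γ belongs to ℬ; in particular A_D is a polynomial in B. -/
open Polynomial Matrix

/-- The adjacency matrix of the underlying digraph of a nonnegative matrix `B`:
`(A)_{xy} = 1` iff `(B)_{xy} > 0`. -/
noncomputable def adjOf {V : Type*} [Fintype V] (B : Matrix V V ℝ) : Matrix V V ℝ :=
  Matrix.of fun x y => if 0 < B x y then (1 : ℝ) else 0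

/-- Directed distance from `x` to `y` in the underlying digraph of `B`:
the least `ℓ` such that there is a directed walk of length `ℓ` from `x` to `y`. -/
noncomputable def gdist {V : Type*} [Fintype V] [DecidableEq V]
    (B : Matrix V V ℝ) (x y : V) : ℕ :=
  sInf {ℓ : ℕ | ((adjOf B) ^ ℓ) x y ≠ 0}

/-- `D` is the diameter of the underlying digraph of `B`. -/
def IsDiameter {V : Type*} [Fintype V] [DecidableEq V] (B : Matrix V V ℝ) (D : ℕ) : Prop :=
  (∀ x y : V, gdist B x y ≤ D) ∧ ∃ x y : V, gdist B x y = D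

/-- The distance-`i` matrix of the underlying digraph of `B`. -/
noncomputable def distMat {V : Type*} [Fintype V] [DecidableEq V]
    (B : Matrix V V ℝ) (i : ℕ) : Matrix V V ℝ :=
  Matrix.of fun x y => if gdist B x y = i then (1 : ℝ) else 0

/-- The inner product `⟨p,q⟩ = (1/|X|)·trace(p(B)·(conj q(B))ᵀ)` on polynomials. -/
noncomputable def pInner {V : Type*} [Fintype V] [DecidableEq V]
    (B : Matrix V V ℝ) (p q : Polynomial ℝ) : ℝ :=
  (Matrix.trace (aeval B p * (aeval B q)ᵀ)) / (Fintype.card V : ℝ)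

/-- `p` is a family of predistance polynomials for `B`. -/
def IsPredistance {V : Type*} [Fintype V] [DecidableEq V]
    (B : Matrix V V ℝ) (lam : ℝ) (d : ℕ) (p : Fin (d + 1) → Polynomial ℝ) : Prop :=
  (∀ i, (p i).natDegree = (i : ℕ)) ∧
  (∀ i j, i ≠ j → pInner B (p i) (p j) = 0) ∧
  (∀ i, pInner B (p i) (p i) = (p i).eval lam)

/-- The matrices `Bmat 0, …, Bmat D` are the relation matrices of a commutative
`D`-class association scheme (01-matrices summing to `J`, containing `I`, closed
under transpose, with commuting products lying in their span). -/
def IsAssocScheme {V : Type*} [Fintype V] [DecidableEq V]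
    (D : ℕ) (Bmat : Fin (D + 1) → Matrix V V ℂ) : Prop :=
  Bmat 0 = 1 ∧
  (∀ i, Bmat i ≠ 0) ∧
  (∀ i x y, Bmat i x y = 0 ∨ Bmat i x y = 1) ∧
  (∑ i, Bmat i = Matrix.of (fun _ _ => (1 : ℂ))) ∧
  (∀ i, ∃ j, (Bmat i)ᵀ = Bmat j) ∧
  (∀ i j, Bmat i * Bmat j ∈ Submodule.span ℂ (Set.range Bmat)) ∧
  (∀ i j, Bmat i * Bmat j = Bmat j * Bmat i)

/-!
The relations of the scheme partition `X × X`, and a matrix lies in their span `ℬ` iff its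
entries are constant on each relation. Every power of `B` lies in `ℬ`; since `B` is nonnegative,
`∂(x, y)` is the least `ℓ` with `(B ^ ℓ)_{xy} ≠ 0`, so the distance is constant on each relation
too, and hence `A_i ∈ ℬ`.
-/
namespace Matrix

section NonnegPow

variable {n R : Type*} [Fintype n] [DecidableEq n] [Ring R] [LinearOrder R] [IsOrderedRing R]
  [PosMulStrictMono R] [Nontrivial R]

theorem pow_apply_pos_iff_of_apply_pos_iff {A C : Matrix n n R} (hA : ∀ i j, 0 ≤ A i j)
    (hC : ∀ i j, 0 ≤ C i j) (hAC : ∀ i j, 0 < A i j ↔ 0 < C i j) (k : ℕ) (i j : n) :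
    0 < (A ^ k) i j ↔ 0 < (C ^ k) i j := by
  have hquiver : toQuiver A = toQuiver C := by simp only [toQuiver, hAC]
  rw [pow_apply_pos_iff_nonempty_path hA, pow_apply_pos_iff_nonempty_path hC, hquiver]

theorem pow_apply_ne_zero_iff_of_apply_pos_iff {A C : Matrix n n R} (hA : ∀ i j, 0 ≤ A i j)
    (hC : ∀ i j, 0 ≤ C i j) (hAC : ∀ i j, 0 < A i j ↔ 0 < C i j) (k : ℕ) (i j : n) :
    (A ^ k) i j ≠ 0 ↔ (C ^ k) i j ≠ 0 := by
  rw [← (pow_apply_nonneg hA k i j).lt_iff_ne', ← (pow_apply_nonneg hC k i j).lt_iff_ne']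
  exact pow_apply_pos_iff_of_apply_pos_iff hA hC hAC k i j

end NonnegPow

section Indicator

variable {V ι R : Type*}

def indicatorMat [DecidableEq ι] [Zero R] [One R] (c : V → V → ι) (i : ι) : Matrix V V R :=
  of fun x y => if c x y = i then 1 else 0

theorem exists_eq_indicatorMat [Fintype ι] [DecidableEq ι] [AddCommMonoidWithOne R] [CharZero R]
    {E : ι → Matrix V V R} (h01 : ∀ i x y, E i x y = 0 ∨ E i x y = 1)
    (hsum : ∑ i, E i = of fun _ _ => 1) : ∃ c : V → V → ι, E = indicatorMat c := by
  classical
  have hunique (x y : V) : ∃! i, E i x y = 1 := by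
    have hcard : (Finset.univ.filter fun i => E i x y = 1).card = 1 := by
      have hentry : ∑ i, E i x y = 1 := by simpa [Matrix.sum_apply] using congr_fun₂ hsum x y
      rw [← Nat.cast_inj (R := R), Nat.cast_one, Finset.natCast_card_filter]
      refine (Finset.sum_congr rfl fun i _ => ?_).trans hentry
      rcases h01 i x y with h | h <;> simp [h]
    simpa using Finset.card_eq_one_iff_existsUnique.mp hcard
  choose c hc hc_unique using hunique
  refine ⟨c, funext fun i => ext fun x y => ?_⟩
  by_cases hi : c x y = i
  · subst hi; simp [indicatorMat, hc x y]
  · simpa [indicatorMat, hi] using (h01 i x y).resolve_right fun h => hi (hc_unique x y i h).symm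

variable [Semiring R]

theorem mem_span_range_indicatorMat_iff [Fintype ι] [DecidableEq ι] {c : V → V → ι}
    (hc : ∀ i, ∃ x y, c x y = i) {M : Matrix V V R} :
    M ∈ Submodule.span R (Set.range (indicatorMat c)) ↔
      ∀ x y x' y', c x y = c x' y' → M x y = M x' y' := by
  constructor
  · intro hM x y x' y' hxy
    induction hM using Submodule.span_induction with
    | mem _ h =>
      obtain ⟨i, rfl⟩ := h
      simp [indicatorMat, hxy]
    | zero => rfl
    | add _ _ _ _ hM hN => simp [hM, hN]
    | smul a _ _ hM => simp [hM]
  · intro hM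
    choose x y hxy using hc
    have hsum : M = ∑ i, M (x i) (y i) • indicatorMat c i := by
      ext u v
      simp [Matrix.sum_apply, indicatorMat, hM u v (x (c u v)) (y (c u v)) (hxy _).symm]
    rw [hsum]
    exact Submodule.sum_mem _ fun i _ => Submodule.smul_mem _ _ (Submodule.subset_span ⟨i, rfl⟩)

end Indicator

end Matrix

section Distance

variable {V : Type*} [Fintype V] [DecidableEq V]

theorem gdist_eq_sInf_pow_ne_zero {B : Matrix V V ℝ} (hB : ∀ x y, 0 ≤ B x y) (x y : V) :
    gdist B x y = sInf {ℓ : ℕ | (B ^ ℓ) x y ≠ 0} := by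
  have hadj_nonneg (x y : V) : 0 ≤ adjOf B x y := by
    simp only [adjOf, of_apply]; split_ifs <;> simp
  have hadj_pos (x y : V) : 0 < adjOf B x y ↔ 0 < B x y := by
    simp only [adjOf, of_apply]; split_ifs with h <;> simp [h]
  simp only [gdist, pow_apply_ne_zero_iff_of_apply_pos_iff hadj_nonneg hB hadj_pos]

theorem gdist_eq_of_pow_apply_eq {B : Matrix V V ℝ} (hB : ∀ x y, 0 ≤ B x y) {x y x' y' : V}
    (h : ∀ ℓ : ℕ, (B ^ ℓ) x y = (B ^ ℓ) x' y') : gdist B x y = gdist B x' y' := by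
  simp only [gdist_eq_sInf_pow_ne_zero hB, h]

end Distance

theorem stmt18_general {V : Type*} [Fintype V] [DecidableEq V]
    (B : Matrix V V ℝ) (hnn : ∀ x y, 0 ≤ B x y)
    (D : ℕ)
    -- `ℬ = {p(B) : p ∈ ℂ[t]}` is the Bose--Mesner algebra of a commutative
    -- `D`-class association scheme:
    (hBM : ∃ Bmat : Fin (D + 1) → Matrix V V ℂ, IsAssocScheme D Bmat ∧
      (↑(Submodule.span ℂ (Set.range Bmat)) : Set (Matrix V V ℂ)) =
        {M | ∃ p : Polynomial ℂ, aeval (B.map Complex.ofReal) p = M}) :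
    ∀ i : Fin (D + 1), ∃ p : Polynomial ℂ,
      aeval (B.map Complex.ofReal) p = (distMat B (i : ℕ)).map Complex.ofReal := by
  obtain ⟨Bmat, ⟨-, hne, h01, hsum, -⟩, hspan⟩ := hBM
  obtain ⟨c, rfl⟩ := exists_eq_indicatorMat h01 hsum
  have hc_surj (j : Fin (D + 1)) : ∃ x y, c x y = j := by
    by_contra! h
    exact hne j (ext fun x y => by simp [indicatorMat, h x y])
  have hmem_iff (M : Matrix V V ℂ) :
      (∃ p : ℂ[X], aeval (B.map Complex.ofReal) p = M) ↔
        ∀ x y x' y', c x y = c x' y' → M x y = M x' y' := by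
    rw [← mem_span_range_indicatorMat_iff hc_surj, ← SetLike.mem_coe, hspan, Set.mem_ofPred_eq]
  have hdist (x y x' y' : V) (hxy : c x y = c x' y') : gdist B x y = gdist B x' y' := by
    refine gdist_eq_of_pow_apply_eq hnn fun ℓ => ?_
    have hpow : (B ^ ℓ).map Complex.ofRealHom x y = (B ^ ℓ).map Complex.ofRealHom x' y' := by
      rw [Matrix.map_pow]
      exact (hmem_iff _).mp ⟨X ^ ℓ, aeval_X_pow _⟩ x y x' y' hxy
    simpa using hpow
  intro i
  exact (hmem_iff _).mpr fun x y x' y' hxy => by simp [distMat, hdist x y x' y' hxy]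

theorem stmt18 {V : Type*} [Fintype V] [DecidableEq V] [Nonempty V]
    (B : Matrix V V ℝ) (hnn : ∀ x y, 0 ≤ B x y) (hirr : MatIrreducible B)
    (D : ℕ) (hD : IsDiameter B D)
    -- `ℬ = {p(B) : p ∈ ℂ[t]}` is the Bose--Mesner algebra of a commutative
    -- `D`-class association scheme:
    (hBM : ∃ Bmat : Fin (D + 1) → Matrix V V ℂ, IsAssocScheme D Bmat ∧
      (↑(Submodule.span ℂ (Set.range Bmat)) : Set (Matrix V V ℂ)) =
        {M | ∃ p : Polynomial ℂ, aeval (B.map Complex.ofReal) p = M}) :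
    ∀ i : Fin (D + 1), ∃ p : Polynomial ℂ,
      aeval (B.map Complex.ofReal) p = (distMat B (i : ℕ)).map Complex.ofReal :=
  stmt18_general B hnn D hBM
end
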